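/- Let l₁ ≐ l₂ be a non-trivial level equation in canonical form whose two sides have equal constant coefficients that are strictly positive. Then the equation admits a unifier but no most general unifier. -/

import Mathlib

/-- Universe level expressions: `l ::= i | 0 | S l | l ⊔ l'`. -/
inductive Lvl : Type
  | var : ℕ → Lvl
  | zero : Lvl
  | succ : Lvl → Lvl
  | max : Lvl → Lvl → Lvl
  deriving DecidableEq

namespace Lvl

/-- Interpretation of a level under an assignment `φ` of naturals to variables. -/
def eval (φ : ℕ → ℕ) : Lvl → ℕ
  | .var i => φ i
  | .zero => 0
  | .succ l => l.eval φ + 1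
  | .max a b => Nat.max (a.eval φ) (b.eval φ)

/-- Semantic equivalence: equal value under every assignment. -/
def Equiv (l l' : Lvl) : Prop := ∀ φ : ℕ → ℕ, l.eval φ = l'.eval φ

/-- Application of a level substitution. -/
def subst (θ : ℕ → Lvl) : Lvl → Lvl
  | .var i => θ i
  | .zero => .zero
  | .succ l => .succ (l.subst θ)
  | .max a b => .max (a.subst θ) (b.subst θ)

/-- Free variables of a level. -/
def fv : Lvl → Finset ℕ
  | .var i => {i}
  | .zero => ∅
  | .succ l => l.fv
  | .max a b => a.fv ∪ b.fv

/-- The constant level `n`, i.e. `Sⁿ 0`. -/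
def const (n : ℕ) : Lvl := Lvl.succ^[n] Lvl.zero

/-- The level `n + i`, i.e. `Sⁿ i`. -/
def atom (n i : ℕ) : Lvl := Lvl.succ^[n] (Lvl.var i)

end Lvl

/-- `θ` is a unifier of the equation `l₁ ≐ l₂`. -/
def Unifies (θ : ℕ → Lvl) (l₁ l₂ : Lvl) : Prop := Lvl.Equiv (l₁.subst θ) (l₂.subst θ)

/-- `θ` is a most general unifier of the equation `l₁ ≐ l₂`. -/
def IsMGU (θ : ℕ → Lvl) (l₁ l₂ : Lvl) : Prop :=
  Unifies θ l₁ l₂ ∧ ∀ τ, Unifies τ l₁ l₂ →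
    ∃ θ' : ℕ → Lvl, ∀ i ∈ l₁.fv ∪ l₂.fv, Lvl.Equiv ((θ i).subst θ') (τ i)

/-- The level `p ⊔ (n₁ + i₁) ⊔ ... ⊔ (n_m + i_m)` given by canonical-form data. -/
def buildCanon (p : ℕ) (L : List (ℕ × ℕ)) : Lvl :=
  L.foldr (fun a acc => Lvl.max (Lvl.atom a.1 a.2) acc) (Lvl.const p)

/-- The equation `buildCanon p₁ L₁ ≐ buildCanon p₂ L₂` is in canonical form:
both sides canonical (coefficients bounded by the constant coefficient, variables
pairwise distinct), shared variables have equal coefficients on both sides, and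
some coefficient on some side equals `0`. -/
def CanonEqn (p₁ : ℕ) (L₁ : List (ℕ × ℕ)) (p₂ : ℕ) (L₂ : List (ℕ × ℕ)) : Prop :=
  (∀ a ∈ L₁, a.1 ≤ p₁) ∧ (L₁.map Prod.snd).Nodup ∧
  (∀ a ∈ L₂, a.1 ≤ p₂) ∧ (L₂.map Prod.snd).Nodup ∧
  (∀ a ∈ L₁, ∀ b ∈ L₂, a.2 = b.2 → a.1 = b.1) ∧
  0 ∈ (p₁ :: p₂ :: (L₁ ++ L₂).map Prod.fst)

/-!
The all-zero assignment solves the equation, so an mgu `θ` has an instance sending every `θ i`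
to `0`; hence no `θ i` contains a successor, and each evaluates to the maximum of its variables.
Let `v`, with coefficient `n`, occur on one side only. If `n < p`, take the ground solution
`v ↦ 1`. Otherwise `n = p`, and we may assume that the zero coefficient required by canonicity
belongs to a variable `w` occurring on both sides (else take that variable as `v`); take the
ground solution `v ↦ 1, w ↦ p + 1`. It is an instance of `θ`, so `θ v` contains a variable
positive in that instance. Raising it to `p + 1` gives another instance of `θ` in which the side
of `v` is at least `n + p + 1`, while the other side stays at `p` (resp. `p + 1`): it is no
solution.
-/

namespace Lvl

theorem eval_subst (θ : ℕ → Lvl) (φ : ℕ → ℕ) :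
    ∀ l : Lvl, (l.subst θ).eval φ = l.eval fun i => (θ i).eval φ
  | .var _ => rfl
  | .zero => rfl
  | .succ l => by simp only [subst, eval, eval_subst θ φ l]
  | .max a b => by simp only [subst, eval, eval_subst θ φ a, eval_subst θ φ b]

theorem eval_mono {φ φ' : ℕ → ℕ} (h : φ ≤ φ') : ∀ l : Lvl, l.eval φ ≤ l.eval φ'
  | .var i => h i
  | .zero => le_rfl
  | .succ l => Nat.succ_le_succ (eval_mono h l)
  | .max a b => max_le_max (eval_mono h a) (eval_mono h b)

theorem eval_eq_sup_fv_of_eval_zero (φ : ℕ → ℕ) :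
    ∀ l : Lvl, l.eval 0 = 0 → l.eval φ = l.fv.sup φ
  | .var _, _ => by simp [eval, fv]
  | .zero, _ => rfl
  | .succ _, h => by simp [eval] at h
  | .max a b, h => by
    simp only [eval, fv, Nat.max_eq_zero_iff, Finset.sup_union] at h ⊢
    rw [eval_eq_sup_fv_of_eval_zero φ a h.1, eval_eq_sup_fv_of_eval_zero φ b h.2]

theorem eval_const (φ : ℕ → ℕ) (n : ℕ) : (const n).eval φ = n := by
  induction n with
  | zero => rfl
  | succ n ih => simp only [const, Function.iterate_succ_apply'] at ih ⊢; simp [eval, ih]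

theorem eval_atom (φ : ℕ → ℕ) (n i : ℕ) : (atom n i).eval φ = n + φ i := by
  induction n with
  | zero => simp [atom, eval]
  | succ n ih => simp only [atom, Function.iterate_succ_apply'] at ih ⊢; simp [eval, ih]; omega

theorem fv_atom (n i : ℕ) : (atom n i).fv = {i} := by
  induction n with
  | zero => rfl
  | succ n ih => simpa only [atom, Function.iterate_succ_apply', fv] using ih

end Lvl

open Lvl

section buildCanon

variable {p : ℕ} {L : List (ℕ × ℕ)} {φ : ℕ → ℕ}

theorem le_eval_buildCanon : p ≤ (buildCanon p L).eval φ := by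
  induction L with
  | nil => simp [buildCanon, eval_const]
  | cons a L ih => exact ih.trans (le_max_right _ _)

theorem le_eval_buildCanon_of_mem {a : ℕ × ℕ} (ha : a ∈ L) :
    a.1 + φ a.2 ≤ (buildCanon p L).eval φ := by
  induction L with
  | nil => simp at ha
  | cons b L ih =>
    rcases List.mem_cons.1 ha with rfl | ha
    · exact (eval_atom φ a.1 a.2).symm.le.trans (le_max_left _ _)
    · exact (ih ha).trans (le_max_right _ _)

theorem eval_buildCanon_le {c : ℕ} (hp : p ≤ c) (h : ∀ a ∈ L, a.1 + φ a.2 ≤ c) :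
    (buildCanon p L).eval φ ≤ c := by
  induction L with
  | nil => simpa [buildCanon, eval_const] using hp
  | cons a L ih =>
    refine max_le ?_ (ih fun b hb => h b (List.mem_cons_of_mem a hb))
    exact (eval_atom φ a.1 a.2).le.trans (h a List.mem_cons_self)

theorem eval_buildCanon_of_le (h : ∀ a ∈ L, a.1 + φ a.2 ≤ p) : (buildCanon p L).eval φ = p :=
  (eval_buildCanon_le le_rfl h).antisymm le_eval_buildCanon

theorem eval_zero_buildCanon (h : ∀ a ∈ L, a.1 ≤ p) : (buildCanon p L).eval 0 = p :=
  eval_buildCanon_of_le fun a ha => h a ha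

theorem mem_fv_buildCanon {a : ℕ × ℕ} (ha : a ∈ L) : a.2 ∈ (buildCanon p L).fv := by
  induction L with
  | nil => simp at ha
  | cons b L ih =>
    rcases List.mem_cons.1 ha with rfl | ha
    · simp [buildCanon, fv, fv_atom]
    · exact Finset.mem_union_right _ (ih ha)

theorem equiv_buildCanon_of_subset {L' : List (ℕ × ℕ)} (h : L ⊆ L') (h' : L' ⊆ L) :
    Equiv (buildCanon p L) (buildCanon p L') := fun _ =>
  (eval_buildCanon_le le_eval_buildCanon fun _ ha => le_eval_buildCanon_of_mem (h ha)).antisymm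
    (eval_buildCanon_le le_eval_buildCanon fun _ ha => le_eval_buildCanon_of_mem (h' ha))

end buildCanon

namespace IsMGU

variable {θ : ℕ → Lvl} {l₁ l₂ : Lvl}

theorem symm (h : IsMGU θ l₁ l₂) : IsMGU θ l₂ l₁ := by
  refine ⟨fun φ => (h.1 φ).symm, fun τ hτ => ?_⟩
  obtain ⟨θ', hθ'⟩ := h.2 τ fun φ => (hτ φ).symm
  exact ⟨θ', fun i hi => hθ' i (by rwa [Finset.union_comm])⟩

theorem exists_eval_eq (h : IsMGU θ l₁ l₂) {ψ : ℕ → ℕ} (hψ : l₁.eval ψ = l₂.eval ψ) :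
    ∃ φ : ℕ → ℕ, ∀ i ∈ l₁.fv ∪ l₂.fv, (θ i).eval φ = ψ i := by
  obtain ⟨θ', hθ'⟩ := h.2 (fun i => const (ψ i)) fun φ => by
    simpa only [eval_subst, eval_const] using hψ
  exact ⟨fun j => (θ' j).eval 0, fun i hi => by
    simpa only [eval_subst, eval_const] using hθ' i hi 0⟩

theorem eval_eq_sup_fv (h : IsMGU θ l₁ l₂) (h₀ : l₁.eval 0 = l₂.eval 0) {i : ℕ}
    (hi : i ∈ l₁.fv ∪ l₂.fv) (φ : ℕ → ℕ) : (θ i).eval φ = (θ i).fv.sup φ := by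
  obtain ⟨φ₀, hφ₀⟩ := h.exists_eval_eq h₀
  refine eval_eq_sup_fv_of_eval_zero φ (θ i) (Nat.eq_zero_of_le_zero ?_)
  exact (eval_mono (fun _ => Nat.zero_le _) (θ i)).trans (hφ₀ i hi).le

/-- `ψ'` is the instance of `θ` obtained from the one realizing `ψ` by raising to `T` a variable of
`θ v` that is positive there. -/
theorem exists_pumped_solution (h : IsMGU θ l₁ l₂) (h₀ : l₁.eval 0 = l₂.eval 0)
    {ψ : ℕ → ℕ} (hψ : l₁.eval ψ = l₂.eval ψ) {v : ℕ} (hv : v ∈ l₁.fv ∪ l₂.fv) (hψv : 0 < ψ v)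
    (T : ℕ) : ∃ ψ' : ℕ → ℕ, l₁.eval ψ' = l₂.eval ψ' ∧ T ≤ ψ' v ∧
      ∀ i ∈ l₁.fv ∪ l₂.fv, ψ' i ≤ max T (ψ i) ∧ (ψ i = 0 → ψ' i = 0) := by
  obtain ⟨φ, hφ⟩ := h.exists_eval_eq hψ
  have hsup : ∀ i ∈ l₁.fv ∪ l₂.fv, (θ i).fv.sup φ = ψ i := fun i hi =>
    (h.eval_eq_sup_fv h₀ hi φ).symm.trans (hφ i hi)
  obtain ⟨x, hxv, hx⟩ := Finset.lt_sup_iff.1 (hsup v hv ▸ hψv)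
  set φ' := Function.update φ x T
  refine ⟨fun i => (θ i).eval φ', by simpa only [eval_subst] using h.1 φ', ?_, fun i hi => ?_⟩
  · show T ≤ (θ v).eval φ'
    rw [h.eval_eq_sup_fv h₀ hv]
    exact (Function.update_self x T φ).symm.le.trans (Finset.le_sup hxv)
  have hle : ∀ y ∈ (θ i).fv, φ y ≤ ψ i := fun y hy => hsup i hi ▸ Finset.le_sup hy
  simp only [h.eval_eq_sup_fv h₀ hi]
  refine ⟨Finset.sup_le fun y hy => ?_, fun hψi => ?_⟩
  · rcases eq_or_ne y x with rfl | hyx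
    · simp [φ']
    · simpa [φ', Function.update_of_ne hyx] using Or.inr (hle y hy)
  · refine Nat.eq_zero_of_le_zero (Finset.sup_le fun y hy => ?_)
    have hyx : y ≠ x := by rintro rfl; have := hle y hy; omega
    simpa [φ', Function.update_of_ne hyx, hψi] using hle y hy

end IsMGU

section noMGU

variable {p : ℕ} {L₁ L₂ : List (ℕ × ℕ)} {θ : ℕ → Lvl}

theorem not_isMGU_of_one_sided_lt {n v : ℕ} (hL₁ : ∀ a ∈ L₁, a.1 ≤ p)
    (hL₂ : ∀ a ∈ L₂, a.1 ≤ p) (hv : (n, v) ∈ L₁) (hv_lt : ∀ a ∈ L₁, a.2 = v → a.1 < p)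
    (hv₂ : ∀ a ∈ L₂, a.2 ≠ v) : ¬ IsMGU θ (buildCanon p L₁) (buildCanon p L₂) := by
  intro hθ
  let ψ : ℕ → ℕ := fun i => if i = v then 1 else 0
  have hψ₂ : ∀ a ∈ L₂, ψ a.2 = 0 := fun a ha => if_neg (hv₂ a ha)
  have hψ : (buildCanon p L₁).eval ψ = (buildCanon p L₂).eval ψ := by
    rw [eval_buildCanon_of_le (L := L₁), eval_buildCanon_of_le (L := L₂)]
    · exact fun a ha => by simpa [hψ₂ a ha] using hL₂ a ha
    · intro a ha
      by_cases hav : a.2 = v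
      · simpa [ψ, hav] using hv_lt a ha hav
      · simpa [ψ, hav] using hL₁ a ha
  obtain ⟨ψ', hψ', hψ'v, hψ'le⟩ := hθ.exists_pumped_solution
    (by rw [eval_zero_buildCanon hL₁, eval_zero_buildCanon hL₂]) hψ
    (Finset.mem_union_left _ (mem_fv_buildCanon hv)) (by simp [ψ]) (p + 1)
  have hRHS : (buildCanon p L₂).eval ψ' = p := eval_buildCanon_of_le fun a ha => by
    rw [(hψ'le a.2 (Finset.mem_union_right _ (mem_fv_buildCanon ha))).2 (hψ₂ a ha)]
    exact hL₂ a ha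
  have hLHS := le_eval_buildCanon_of_mem (p := p) hv (φ := ψ')
  omega

theorem not_isMGU_of_one_sided_of_shared_zero {v w : ℕ} (hp : 0 < p)
    (hL₁ : ∀ a ∈ L₁, a.1 ≤ p) (hL₂ : ∀ a ∈ L₂, a.1 ≤ p) (hv : (p, v) ∈ L₁)
    (hv₂ : ∀ a ∈ L₂, a.2 ≠ v) (hw₁ : (0, w) ∈ L₁) (hw₂ : (0, w) ∈ L₂)
    (hw₁_eq : ∀ a ∈ L₁, a.2 = w → a.1 = 0) (hw₂_eq : ∀ a ∈ L₂, a.2 = w → a.1 = 0) :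
    ¬ IsMGU θ (buildCanon p L₁) (buildCanon p L₂) := by
  intro hθ
  have hwv : w ≠ v := hv₂ _ hw₂
  let ψ : ℕ → ℕ := fun i => if i = v then 1 else if i = w then p + 1 else 0
  have hψ : ∀ L : List (ℕ × ℕ), (∀ a ∈ L, a.1 ≤ p) → (0, w) ∈ L →
      (∀ a ∈ L, a.2 = w → a.1 = 0) → (buildCanon p L).eval ψ = p + 1 := by
    intro L hL hwL hwL_eq
    refine (eval_buildCanon_le (by omega) fun a ha => ?_).antisymm ?_
    · have := hL a ha
      simp only [ψ]
      split_ifs with hav haw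
      · omega
      · have := hwL_eq a ha haw
        omega
      · omega
    · simpa [ψ, hwv] using le_eval_buildCanon_of_mem (p := p) hwL (φ := ψ)
  obtain ⟨ψ', hψ', hψ'v, hψ'le⟩ := hθ.exists_pumped_solution
    (by rw [eval_zero_buildCanon hL₁, eval_zero_buildCanon hL₂])
    ((hψ L₁ hL₁ hw₁ hw₁_eq).trans (hψ L₂ hL₂ hw₂ hw₂_eq).symm)
    (Finset.mem_union_left _ (mem_fv_buildCanon hv)) (by simp [ψ]) (p + 1)
  have hRHS : (buildCanon p L₂).eval ψ' ≤ p + 1 := by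
    refine eval_buildCanon_le (by omega) fun a ha => ?_
    have hψ'a := hψ'le a.2 (Finset.mem_union_right _ (mem_fv_buildCanon ha))
    by_cases haw : a.2 = w
    · have := hw₂_eq a ha haw
      rw [haw] at hψ'a ⊢
      simp only [ψ, if_neg hwv, if_true, max_self] at hψ'a
      omega
    · have := hψ'a.2 (by simp [ψ, hv₂ a ha, haw])
      have := hL₂ a ha
      omega
  have hLHS := le_eval_buildCanon_of_mem (p := p) hv (φ := ψ')
  omega

end noMGU

namespace CanonEqn

variable {p₁ p₂ : ℕ} {L₁ L₂ : List (ℕ × ℕ)}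

theorem symm (h : CanonEqn p₁ L₁ p₂ L₂) : CanonEqn p₂ L₂ p₁ L₁ := by
  obtain ⟨h₁, hnd₁, h₂, hnd₂, hshared, hzero⟩ := h
  refine ⟨h₂, hnd₂, h₁, hnd₁, fun a ha b hb hab => (hshared b hb a ha hab.symm).symm, ?_⟩
  simp only [List.mem_cons, List.map_append, List.mem_append] at hzero ⊢
  tauto

theorem snd_ne_of_mem_of_not_mem (h : CanonEqn p₁ L₁ p₂ L₂) {a : ℕ × ℕ} (ha : a ∈ L₁)
    (ha₂ : a ∉ L₂) : ∀ b ∈ L₂, b.2 ≠ a.2 := fun b hb hba =>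
  ha₂ (Prod.ext (h.2.2.2.2.1 a ha b hb hba.symm) hba.symm ▸ hb)

theorem exists_zero_mem (h : CanonEqn p₁ L₁ p₂ L₂) (hp₁ : 0 < p₁) (hp₂ : 0 < p₂) :
    ∃ w, (0, w) ∈ L₁ ∨ (0, w) ∈ L₂ := by
  obtain ⟨-, -, -, -, -, hzero⟩ := h
  simp only [List.mem_cons, List.map_append, List.mem_append, List.mem_map] at hzero
  rcases hzero with h | h | ⟨⟨_, w⟩, hw, rfl⟩ | ⟨⟨_, w⟩, hw, rfl⟩
  · omega
  · omega
  · exact ⟨w, Or.inl hw⟩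
  · exact ⟨w, Or.inr hw⟩

variable {p : ℕ} {θ : ℕ → Lvl}

theorem not_isMGU_of_lt (h : CanonEqn p L₁ p L₂) {n v : ℕ} (hv : (n, v) ∈ L₁)
    (hv₂ : (n, v) ∉ L₂) (hn : n < p) : ¬ IsMGU θ (buildCanon p L₁) (buildCanon p L₂) :=
  not_isMGU_of_one_sided_lt h.1 h.2.2.1 hv
    (fun _ ha hav => List.inj_on_of_nodup_map h.2.1 ha hv hav ▸ hn)
    (h.snd_ne_of_mem_of_not_mem hv hv₂)

theorem not_isMGU_of_mem_of_not_mem (h : CanonEqn p L₁ p L₂) (hp : 0 < p) {n v : ℕ}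
    (hv : (n, v) ∈ L₁) (hv₂ : (n, v) ∉ L₂) : ¬ IsMGU θ (buildCanon p L₁) (buildCanon p L₂) := by
  rcases (h.1 _ hv).lt_or_eq with hn | rfl
  · exact h.not_isMGU_of_lt hv hv₂ hn
  obtain ⟨w, hw⟩ := h.exists_zero_mem hp hp
  by_cases hw₁ : (0, w) ∈ L₁ <;> by_cases hw₂ : (0, w) ∈ L₂
  · have hw_eq : ∀ {L}, (List.map Prod.snd L).Nodup → (0, w) ∈ L → ∀ a ∈ L, a.2 = w → a.1 = 0 :=
      fun hnd hwL a ha haw => congrArg Prod.fst (List.inj_on_of_nodup_map hnd ha hwL haw)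
    exact not_isMGU_of_one_sided_of_shared_zero hp h.1 h.2.2.1 hv
      (h.snd_ne_of_mem_of_not_mem hv hv₂) hw₁ hw₂ (hw_eq h.2.1 hw₁) (hw_eq h.2.2.2.1 hw₂)
  · exact h.not_isMGU_of_lt hw₁ hw₂ hp
  · exact fun hθ => h.symm.not_isMGU_of_lt hw₂ hw₁ hp hθ.symm
  · exact (hw.elim hw₁ hw₂).elim

end CanonEqn

/-- A non-trivial level equation in canonical form whose two sides have equal and
strictly positive constant coefficients admits a unifier but no most general
unifier. -/
theorem solvable_no_mgu_equal_const (p₁ p₂ : ℕ) (L₁ L₂ : List (ℕ × ℕ))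
    (hcanon : CanonEqn p₁ L₁ p₂ L₂)
    (hnontriv : ¬ Lvl.Equiv (buildCanon p₁ L₁) (buildCanon p₂ L₂))
    (heq : p₁ = p₂) (hpos : 0 < p₁) :
    (∃ θ, Unifies θ (buildCanon p₁ L₁) (buildCanon p₂ L₂)) ∧
      ¬ ∃ θ, IsMGU θ (buildCanon p₁ L₁) (buildCanon p₂ L₂) := by
  subst heq
  refine ⟨⟨fun _ => .zero, fun φ => ?_⟩, ?_⟩
  · rw [eval_subst, eval_subst]
    exact (eval_zero_buildCanon hcanon.1).trans (eval_zero_buildCanon hcanon.2.2.1).symm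
  rintro ⟨θ, hθ⟩
  have hsub : ¬ (L₁ ⊆ L₂ ∧ L₂ ⊆ L₁) := fun h => hnontriv (equiv_buildCanon_of_subset h.1 h.2)
  simp only [List.subset_def, not_and_or, not_forall, exists_prop] at hsub
  rcases hsub with ⟨⟨n, v⟩, hv₁, hv₂⟩ | ⟨⟨n, v⟩, hv₂, hv₁⟩
  · exact hcanon.not_isMGU_of_mem_of_not_mem hpos hv₁ hv₂ hθ
  · exact hcanon.symm.not_isMGU_of_mem_of_not_mem hpos hv₂ hv₁ hθ.symm
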